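/- For c > a > 0, the function κ ↦ g(a,c;κ) := M'(a,c;κ)/M(a,c;κ) is strictly increasing on R. -/

import Mathlib

/-- The rising factorial `(a)_j = a (a+1) ⋯ (a+j-1)`. -/
noncomputable def risingFac (a : ℝ) : ℕ → ℝ
  | 0 => 1
  | j + 1 => risingFac a j * (a + j)

/-- Kummer's confluent hypergeometric function
`M(a, c, κ) = Σ_{j ≥ 0} ((a)_j / (c)_j) κ^j / j!`. -/
noncomputable def M (a c κ : ℝ) : ℝ :=
  ∑' j : ℕ, risingFac a j / risingFac c j * κ ^ j / (Nat.factorial j : ℝ)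

/-- `g(a, c; κ) = M'(a, c; κ) / M(a, c; κ)`, the derivative taken in `κ`. -/
noncomputable def g (a c κ : ℝ) : ℝ := deriv (M a c) κ / M a c κ

/-!
Euler's integral `B(a, c - a) M(a, c, κ) = ∫₀¹ e^{κt} t^{a-1} (1-t)^{c-a-1} dt` exhibits
`M(a, c, ·)` as a multiple of the moment generating function of the Beta(a, c - a) law.
So `g(a, c; κ)` is the mean of the exponentially tilted measure `e^{κt} t^{a-1} (1-t)^{c-a-1} dt`,
and its derivative in `κ` is the variance of that measure, which is positive because the
measure is not a point mass.
-/

open MeasureTheory Set ProbabilityTheory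

lemma integral_pos_of_ae_pos {α : Type*} [MeasurableSpace α] {μ : Measure α} (hμ : μ ≠ 0)
    {f : α → ℝ} (hf : Integrable f μ) (hpos : ∀ᵐ x ∂μ, 0 < f x) : 0 < ∫ x, f x ∂μ := by
  rw [integral_pos_iff_support_of_nonneg_ae (hpos.mono fun _ h => h.le) hf, pos_iff_ne_zero]
  intro h
  have : ∀ᵐ x ∂μ, False :=
    (hpos.and (measure_eq_zero_iff_ae_notMem.1 h)).mono fun x hx => hx.2 hx.1.ne'
  exact hμ (ae_eq_bot.1 (Filter.eventually_false_iff_eq_bot.1 this))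

section TiltedMoment

variable {w : ℝ → ℝ}

noncomputable def tiltedMoment (w : ℝ → ℝ) (n : ℕ) (κ : ℝ) : ℝ :=
  ∫ t in Ioo (0 : ℝ) 1, t ^ n * Real.exp (κ * t) * w t

lemma abs_pow_mul_exp_le {t : ℝ} (ht : t ∈ Ioo (0 : ℝ) 1) (n : ℕ) (x : ℝ) :
    |t ^ n * Real.exp (x * t)| ≤ Real.exp |x| := by
  have htn : |t ^ n| ≤ 1 := by
    rw [abs_pow, abs_of_pos ht.1]
    exact pow_le_one₀ ht.1.le ht.2.le
  have hexp : Real.exp (x * t) ≤ Real.exp |x| := by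
    gcongr
    calc x * t ≤ |x| * t := mul_le_mul_of_nonneg_right (le_abs_self x) ht.1.le
      _ ≤ |x| := mul_le_of_le_one_right (abs_nonneg x) ht.2.le
  rw [abs_mul, Real.abs_exp]
  nlinarith [Real.exp_pos (x * t)]

lemma integrableOn_pow_mul_exp_mul (hw : IntegrableOn w (Ioo 0 1)) (n : ℕ) (κ : ℝ) :
    IntegrableOn (fun t => t ^ n * Real.exp (κ * t) * w t) (Ioo 0 1) :=
  hw.bdd_mul (by fun_prop : Measurable fun t : ℝ => t ^ n * Real.exp (κ * t)).aestronglyMeasurable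
    ((ae_restrict_iff' measurableSet_Ioo).2 <| ae_of_all _ fun _ ht => abs_pow_mul_exp_le ht n κ)

lemma hasDerivAt_tiltedMoment (hw : IntegrableOn w (Ioo 0 1)) (n : ℕ) (κ : ℝ) :
    HasDerivAt (tiltedMoment w n) (tiltedMoment w (n + 1) κ) κ := by
  have h_bound : ∀ᵐ t ∂volume.restrict (Ioo (0 : ℝ) 1), ∀ x ∈ Metric.ball κ 1,
      ‖t ^ (n + 1) * Real.exp (x * t) * w t‖ ≤ Real.exp (|κ| + 1) * |w t| := by
    refine (ae_restrict_iff' measurableSet_Ioo).2 <| ae_of_all _ fun t ht x hx => ?_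
    have hx : |x| ≤ |κ| + 1 := by
      have := abs_sub_abs_le_abs_sub x κ
      rw [Metric.mem_ball, Real.dist_eq] at hx
      linarith
    rw [Real.norm_eq_abs, abs_mul]
    gcongr
    exact (abs_pow_mul_exp_le ht _ x).trans (Real.exp_le_exp.2 hx)
  have h_diff : ∀ᵐ t ∂volume.restrict (Ioo (0 : ℝ) 1), ∀ x ∈ Metric.ball κ 1,
      HasDerivAt (fun y => t ^ n * Real.exp (y * t) * w t)
        (t ^ (n + 1) * Real.exp (x * t) * w t) x :=
    ae_of_all _ fun t x _ =>
      ((((hasDerivAt_mul_const t).exp).const_mul (t ^ n)).mul_const (w t)).congr_deriv (by ring)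
  exact (hasDerivAt_integral_of_dominated_loc_of_deriv_le (Metric.ball_mem_nhds κ one_pos)
    (.of_forall fun x => (integrableOn_pow_mul_exp_mul hw n x).aestronglyMeasurable)
    (integrableOn_pow_mul_exp_mul hw n κ)
    (integrableOn_pow_mul_exp_mul hw (n + 1) κ).aestronglyMeasurable
    h_bound (hw.abs.const_mul _) h_diff).2

lemma tiltedMoment_zero_pos (hw : IntegrableOn w (Ioo 0 1)) (hpos : ∀ t ∈ Ioo (0 : ℝ) 1, 0 < w t)
    (κ : ℝ) : 0 < tiltedMoment w 0 κ :=
  integral_pos_of_ae_pos (by simp) (integrableOn_pow_mul_exp_mul hw 0 κ) <|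
    (ae_restrict_iff' measurableSet_Ioo).2 <| ae_of_all _ fun t ht => by
      have := hpos t ht
      positivity

lemma sq_tiltedMoment_one_lt (hw : IntegrableOn w (Ioo 0 1)) (hpos : ∀ t ∈ Ioo (0 : ℝ) 1, 0 < w t)
    (κ : ℝ) : tiltedMoment w 1 κ ^ 2 < tiltedMoment w 0 κ * tiltedMoment w 2 κ := by
  have hZ := tiltedMoment_zero_pos hw hpos κ
  set m := tiltedMoment w 1 κ / tiltedMoment w 0 κ
  -- `F t = (t - m)² e^{κt} w t`, expanded so that its integral is a combination of moments
  set F : ℝ → ℝ := fun t => t ^ 2 * Real.exp (κ * t) * w t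
    - 2 * m * (t ^ 1 * Real.exp (κ * t) * w t) + m ^ 2 * (t ^ 0 * Real.exp (κ * t) * w t)
  have h₀ := integrableOn_pow_mul_exp_mul hw 0 κ
  have h₁ := integrableOn_pow_mul_exp_mul hw 1 κ
  have h₂ := integrableOn_pow_mul_exp_mul hw 2 κ
  have h₂₁ : IntegrableOn (fun t => t ^ 2 * Real.exp (κ * t) * w t
      - 2 * m * (t ^ 1 * Real.exp (κ * t) * w t)) (Ioo 0 1) := h₂.sub (h₁.const_mul _)
  have hF_int : IntegrableOn F (Ioo 0 1) := h₂₁.add (h₀.const_mul _)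
  have hF : ∫ t in Ioo (0 : ℝ) 1, F t
      = tiltedMoment w 2 κ - 2 * m * tiltedMoment w 1 κ + m ^ 2 * tiltedMoment w 0 κ := by
    rw [integral_add h₂₁ (h₀.const_mul _), integral_sub h₂ (h₁.const_mul _),
      integral_const_mul, integral_const_mul]
    rfl
  have hF_pos : 0 < ∫ t in Ioo (0 : ℝ) 1, F t := by
    refine integral_pos_of_ae_pos (by simp) hF_int ?_
    filter_upwards [ae_restrict_mem measurableSet_Ioo, Measure.ae_ne _ m] with t ht htm
    rw [show F t = (t - m) ^ 2 * Real.exp (κ * t) * w t by ring]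
    have := hpos t ht
    have := sub_ne_zero.2 htm
    positivity
  have hvar : tiltedMoment w 0 κ * (tiltedMoment w 2 κ - 2 * m * tiltedMoment w 1 κ
      + m ^ 2 * tiltedMoment w 0 κ)
      = tiltedMoment w 0 κ * tiltedMoment w 2 κ - tiltedMoment w 1 κ ^ 2 := by
    simp only [m]
    field_simp
    ring
  linarith [mul_pos hZ (hF ▸ hF_pos)]

theorem strictMono_tiltedMoment_div (hw : IntegrableOn w (Ioo 0 1))
    (hpos : ∀ t ∈ Ioo (0 : ℝ) 1, 0 < w t) :
    StrictMono fun κ => tiltedMoment w 1 κ / tiltedMoment w 0 κ := by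
  refine strictMono_of_hasDerivAt_pos (fun κ => ((hasDerivAt_tiltedMoment hw 1 κ).div
    (hasDerivAt_tiltedMoment hw 0 κ) (tiltedMoment_zero_pos hw hpos κ).ne')) fun κ => ?_
  have := sq_tiltedMoment_one_lt hw hpos κ
  have := tiltedMoment_zero_pos hw hpos κ
  apply div_pos <;> nlinarith

open scoped Nat in
lemma tiltedMoment_zero_eq_tsum (hw : IntegrableOn w (Ioo 0 1)) (κ : ℝ) :
    tiltedMoment w 0 κ = ∑' j : ℕ, κ ^ j / j ! * ∫ t in Ioo (0 : ℝ) 1, t ^ j * w t := by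
  have h_int (j : ℕ) : IntegrableOn (fun t => κ ^ j / j ! * (t ^ j * w t)) (Ioo 0 1) := by
    simpa [IntegrableOn] using (integrableOn_pow_mul_exp_mul hw j 0).const_mul (κ ^ j / j !)
  have h_norm (j : ℕ) : ∫ t in Ioo (0 : ℝ) 1, ‖κ ^ j / j ! * (t ^ j * w t)‖
      ≤ |κ| ^ j / j ! * ∫ t in Ioo (0 : ℝ) 1, |w t| := by
    rw [← integral_const_mul]
    refine setIntegral_mono_on (h_int j).norm (hw.abs.const_mul _) measurableSet_Ioo fun t ht => ?_
    have : |t ^ j| ≤ 1 := by simpa using abs_pow_mul_exp_le ht j 0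
    rw [Real.norm_eq_abs, abs_mul, abs_mul, abs_div, abs_pow, Nat.abs_cast]
    gcongr
    exact mul_le_of_le_one_left (abs_nonneg _) this
  have h_sum : Summable fun j => ∫ t in Ioo (0 : ℝ) 1, ‖κ ^ j / j ! * (t ^ j * w t)‖ :=
    .of_nonneg_of_le (fun j => integral_nonneg fun _ => norm_nonneg _) h_norm
      ((Real.summable_pow_div_factorial |κ|).mul_right _)
  simp_rw [← integral_const_mul]
  rw [integral_tsum_of_summable_integral_norm h_int h_sum, tiltedMoment]
  refine setIntegral_congr_fun measurableSet_Ioo fun t _ => ?_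
  rw [pow_zero, one_mul, Real.exp_eq_exp_ℝ, NormedSpace.exp_eq_tsum_div, ← tsum_mul_right]
  exact tsum_congr fun j => by ring

end TiltedMoment

section Beta

noncomputable def betaKernel (u v t : ℝ) : ℝ := t ^ (u - 1) * (1 - t) ^ (v - 1)

lemma betaKernel_pos (u v : ℝ) {t : ℝ} (ht : t ∈ Ioo (0 : ℝ) 1) : 0 < betaKernel u v t :=
  mul_pos (Real.rpow_pos_of_pos ht.1 _) (Real.rpow_pos_of_pos (sub_pos.2 ht.2) _)

lemma ofReal_betaKernel (u v : ℝ) {t : ℝ} (ht : t ∈ Icc (0 : ℝ) 1) :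
    (betaKernel u v t : ℂ) = (t : ℂ) ^ ((u : ℂ) - 1) * (1 - (t : ℂ)) ^ ((v : ℂ) - 1) := by
  rw [betaKernel, Complex.ofReal_mul, Complex.ofReal_cpow ht.1, Complex.ofReal_cpow
    (sub_nonneg.2 ht.2)]
  push_cast
  rfl

lemma integrableOn_betaKernel {u v : ℝ} (hu : 0 < u) (hv : 0 < v) :
    IntegrableOn (betaKernel u v) (Ioo 0 1) := by
  have hC := (intervalIntegrable_iff_integrableOn_Ioc_of_le zero_le_one).1 <|
    Complex.betaIntegral_convergent (u := u) (v := v) (by simpa) (by simpa)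
  refine IntegrableOn.congr_fun (hC.mono_set Ioo_subset_Ioc_self).re (fun t ht => ?_)
    measurableSet_Ioo
  rw [← ofReal_betaKernel u v (Ioo_subset_Icc_self ht)]
  exact Complex.ofReal_re _

lemma integral_betaKernel {u v : ℝ} (hu : 0 < u) (hv : 0 < v) :
    ∫ t in Ioo (0 : ℝ) 1, betaKernel u v t = beta u v := by
  rw [beta_eq_betaIntegralReal u v hu hv, Complex.betaIntegral,
    intervalIntegral.integral_of_le zero_le_one, ← integral_Ioc_eq_integral_Ioo,
    setIntegral_congr_fun measurableSet_Ioc fun t ht =>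
      (ofReal_betaKernel u v (Ioc_subset_Icc_self ht)).symm,
    integral_complex_ofReal, Complex.ofReal_re]

lemma setIntegral_pow_mul_betaKernel (u v : ℝ) (j : ℕ) :
    ∫ t in Ioo (0 : ℝ) 1, t ^ j * betaKernel u v t
      = ∫ t in Ioo (0 : ℝ) 1, betaKernel (u + j) v t := by
  refine setIntegral_congr_fun measurableSet_Ioo fun t ht => ?_
  rw [betaKernel, betaKernel, add_sub_right_comm, Real.rpow_add_natCast ht.1.ne']
  ring

lemma risingFac_pos {a : ℝ} (ha : 0 < a) (j : ℕ) : 0 < risingFac a j := by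
  induction j with
  | zero => exact one_pos
  | succ j ih => exact mul_pos ih (by positivity)

lemma risingFac_mul_Gamma {a : ℝ} (ha : 0 < a) (j : ℕ) :
    risingFac a j * Real.Gamma a = Real.Gamma (a + j) := by
  induction j with
  | zero => simp [risingFac]
  | succ j ih =>
    rw [risingFac, mul_right_comm, ih, Nat.cast_succ, ← add_assoc,
      Real.Gamma_add_one (by positivity), mul_comm]

lemma beta_add_nat {u v : ℝ} (hu : 0 < u) (hv : 0 < v) (j : ℕ) :
    beta (u + j) v = risingFac u j / risingFac (u + v) j * beta u v := by
  have hΓu := Real.Gamma_pos_of_pos hu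
  have hΓuv := Real.Gamma_pos_of_pos (add_pos hu hv)
  have hr := risingFac_pos (add_pos hu hv) j
  rw [beta, beta, add_right_comm, ← risingFac_mul_Gamma hu, ← risingFac_mul_Gamma (add_pos hu hv)]
  field_simp

end Beta

lemma M_mul_beta {a c : ℝ} (ha : 0 < a) (hac : a < c) (κ : ℝ) :
    M a c κ * beta a (c - a) = tiltedMoment (betaKernel a (c - a)) 0 κ := by
  rw [tiltedMoment_zero_eq_tsum (integrableOn_betaKernel ha (sub_pos.2 hac)), M, ← tsum_mul_right]
  refine tsum_congr fun j => ?_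
  rw [setIntegral_pow_mul_betaKernel, integral_betaKernel (by positivity) (sub_pos.2 hac),
    beta_add_nat ha (sub_pos.2 hac), add_sub_cancel]
  ring

/-- For `c > a > 0`, the function `κ ↦ g(a, c; κ) = M'(a,c;κ)/M(a,c;κ)` is strictly
increasing on `ℝ`. -/
theorem g_strictMono (a c : ℝ) (ha : 0 < a) (hac : a < c) : StrictMono (g a c) := by
  set w := betaKernel a (c - a)
  have hw : IntegrableOn w (Ioo 0 1) := integrableOn_betaKernel ha (sub_pos.2 hac)
  have hB := beta_pos ha (sub_pos.2 hac)
  have hM : M a c = fun κ => tiltedMoment w 0 κ / beta a (c - a) :=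
    funext fun κ => by rw [← M_mul_beta ha hac, mul_div_cancel_right₀ _ hB.ne']
  have hg : g a c = fun κ => tiltedMoment w 1 κ / tiltedMoment w 0 κ := funext fun κ => by
    have hM' : HasDerivAt (M a c) (tiltedMoment w 1 κ / beta a (c - a)) κ :=
      hM ▸ (hasDerivAt_tiltedMoment hw 0 κ).div_const _
    rw [g, hM'.deriv, hM]
    field_simp
  rw [hg]
  exact strictMono_tiltedMoment_div hw fun t ht => betaKernel_pos _ _ ht
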